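/- Let X be a nonempty closed L-pseudo-Lipschitz subset of the pseudo-Euclidean space ℝ_{(l,p)} with L < 1. Then on ℝ^n \ M_X the set m(x) consists of a single point, and the map ℝ^n \ M_X ∋ x ↦ (the unique element of m(x)) ∈ X is continuous; consequently x ↦ 2A(x − m(x)) = ∇ρ(x) is continuous on ℝ^n \ M_X, where A = diag(1,…,1,−1,…,−1) with l entries 1 and p entries −1. -/

import Mathlib

/-!
For `0 ≤ L < 1` an `L`-pseudo-Lipschitz set is uniformly spacelike:
`(1 - L²)‖x - y‖² ≤ (1 + L²) Q(x - y)` on `X`. Expanding `Q(y - z) ≤ Q(x₀ - z)` around `x₀ ∈ X`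
therefore confines every competitor for the closest point to `z` to a ball around `x₀` of radius
`O(‖x₀ - z‖)`. Hence closest points exist (extreme value theorem) and, as `z` moves locally, stay
in a fixed compact set; a limit of closest points is a closest point, so wherever the closest
point is unique it depends continuously on `z`.
-/

open Filter Topology Set

noncomputable section

/-- The pseudo-Euclidean space `ℝ_{(l,p)}`: `ℝ^(l+p)` with the Euclidean topology. -/
abbrev PE (l p : ℕ) := EuclideanSpace ℝ (Fin (l + p))

/-- The quadratic form `Q(x) = ‖x‖_l² − ‖x‖_p²`. -/
def Q (l p : ℕ) (x : PE l p) : ℝ :=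
  ∑ i : Fin (l + p), if (i : ℕ) < l then (x i) ^ 2 else -((x i) ^ 2)

/-- The pseudo-scalar product `⟪x,y⟫ = Σ_{i<l} x_i y_i − Σ_{i≥l} x_i y_i`. -/
def pseudoInner (l p : ℕ) (x y : PE l p) : ℝ :=
  ∑ i : Fin (l + p), if (i : ℕ) < l then x i * y i else -(x i * y i)

/-- `‖x‖_l`: the Euclidean norm of the first `l` coordinates. -/
def normL (l p : ℕ) (x : PE l p) : ℝ :=
  Real.sqrt (∑ i : Fin (l + p), if (i : ℕ) < l then (x i) ^ 2 else 0)

/-- `‖x‖_p`: the Euclidean norm of the last `p` coordinates. -/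
def normP (l p : ℕ) (x : PE l p) : ℝ :=
  Real.sqrt (∑ i : Fin (l + p), if (i : ℕ) < l then 0 else (x i) ^ 2)

/-- `X` is acausal: `Q(x−y) > 0` for all distinct `x, y ∈ X`. -/
def Acausal (l p : ℕ) (X : Set (PE l p)) : Prop :=
  ∀ x ∈ X, ∀ y ∈ X, x ≠ y → 0 < Q l p (x - y)

/-- `X` is `L`-pseudo-Lipschitz: `L‖x−y‖_l ≥ ‖x−y‖_p` for all `x, y ∈ X`. -/
def PseudoLipschitz (l p : ℕ) (L : ℝ) (X : Set (PE l p)) : Prop :=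
  ∀ x ∈ X, ∀ y ∈ X, normP l p (x - y) ≤ L * normL l p (x - y)

/-- The squared-distance function `ρ(a,X) = inf {Q(x−a) : x ∈ X}`. -/
def rho (l p : ℕ) (X : Set (PE l p)) (a : PE l p) : ℝ :=
  sInf ((fun x => Q l p (x - a)) '' X)

/-- The set of closest points `m(a) = {x ∈ X : Q(x−a) = ρ(a,X)}`, via its equivalent
description `m(a) = {x ∈ X : ∀ b ∈ X, Q(x−a) ≤ Q(b−a)}`. -/
def mm (l p : ℕ) (X : Set (PE l p)) (a : PE l p) : Set (PE l p) :=
  {x ∈ X | ∀ b ∈ X, Q l p (x - a) ≤ Q l p (b - a)}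

/-- The medial axis `M_X`: points with at least two closest points in `X`. -/
def medialAxis (l p : ℕ) (X : Set (PE l p)) : Set (PE l p) :=
  {a | (mm l p X a).Nontrivial}

/-- The vacant axis `W_X`: points with no closest point in `X`. -/
def vacantAxis (l p : ℕ) (X : Set (PE l p)) : Set (PE l p) :=
  {a | mm l p X a = ∅}

/-- The normal set `N(a) = {x : a ∈ m(x)}`. -/
def NN (l p : ℕ) (X : Set (PE l p)) (a : PE l p) : Set (PE l p) :=
  {x | a ∈ mm l p X x}

/-- The strict normal set `N'(a) = {x : m(x) = {a}}`. -/
def NN' (l p : ℕ) (X : Set (PE l p)) (a : PE l p) : Set (PE l p) :=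
  {x | mm l p X x = {a}}

/-- The linear map `A = diag(1,…,1,−1,…,−1)` (with `l` entries `1` and `p` entries `−1`). -/
def Amap (l p : ℕ) (x : PE l p) : PE l p :=
  (WithLp.equiv 2 (Fin (l + p) → ℝ)).symm (fun i => if (i : ℕ) < l then x i else -(x i))

theorem MapClusterPt.prodMk_of_tendsto {α X Y : Type*} [TopologicalSpace X] [TopologicalSpace Y]
    {l : Filter α} {g : α → X} {f : α → Y} {x : X} {y : Y}
    (hg : Tendsto g l (𝓝 x)) (hf : MapClusterPt y l f) :
    MapClusterPt (x, y) l (fun z => (g z, f z)) := by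
  rw [mapClusterPt_iff_frequently] at hf
  rw [((𝓝 x).basis_sets.prod_nhds (𝓝 y).basis_sets).mapClusterPt_iff_frequently]
  rintro ⟨s, t⟩ ⟨hs, ht⟩
  exact ((hf t ht).and_eventually (hg hs)).mono fun z hz => ⟨hz.2, hz.1⟩

theorem continuousWithinAt_of_isMinOn_of_unique {α β : Type*} [TopologicalSpace α]
    [TopologicalSpace β] {F : α → β → ℝ} (hF : Continuous ↿F) {X K : Set β} (hX : IsClosed X)
    (hK : IsCompact K) {s : Set α} {f : α → β} {x : α}
    (hmin : ∀ z ∈ s, f z ∈ X ∧ IsMinOn (F z) X (f z))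
    (huniq : ∀ b ∈ X, IsMinOn (F x) X b → b = f x)
    (hfK : ∀ᶠ z in 𝓝[s] x, f z ∈ K) : ContinuousWithinAt f s x := by
  refine hK.tendsto_nhds_of_unique_mapClusterPt hfK fun b _ hb => huniq b ?_ ?_
  · exact hX.mem_of_mapClusterPt hb (eventually_nhdsWithin_of_forall fun z hz => (hmin z hz).1)
  refine isMinOn_iff.2 fun a ha => ?_
  have hclosed : IsClosed {q : α × β | F q.1 q.2 ≤ F q.1 a} :=
    isClosed_le hF (hF.comp (continuous_fst.prodMk continuous_const))
  exact hclosed.mem_of_mapClusterPt (hb.prodMk_of_tendsto (tendsto_id.mono_left nhdsWithin_le_nhds))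
    (eventually_nhdsWithin_of_forall fun z hz => (hmin z hz).2 ha)

section PseudoEuclidean

variable {l p : ℕ}

theorem normL_sq (x : PE l p) :
    normL l p x ^ 2 = ∑ i : Fin (l + p), if (i : ℕ) < l then x i ^ 2 else 0 :=
  Real.sq_sqrt (Finset.sum_nonneg fun i _ => by split_ifs <;> positivity)

theorem normP_sq (x : PE l p) :
    normP l p x ^ 2 = ∑ i : Fin (l + p), if (i : ℕ) < l then 0 else x i ^ 2 :=
  Real.sq_sqrt (Finset.sum_nonneg fun i _ => by split_ifs <;> positivity)

theorem Q_eq_normL_sq_sub_normP_sq (x : PE l p) : Q l p x = normL l p x ^ 2 - normP l p x ^ 2 := by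
  rw [normL_sq, normP_sq, ← Finset.sum_sub_distrib]
  exact Finset.sum_congr rfl fun i _ => by split_ifs <;> ring

theorem norm_sq_eq_normL_sq_add_normP_sq (x : PE l p) :
    ‖x‖ ^ 2 = normL l p x ^ 2 + normP l p x ^ 2 := by
  rw [normL_sq, normP_sq, ← Finset.sum_add_distrib, EuclideanSpace.norm_sq_eq]
  exact Finset.sum_congr rfl fun i _ => by split_ifs <;> simp

theorem Amap_apply (x : PE l p) (i : Fin (l + p)) :
    Amap l p x i = if (i : ℕ) < l then x i else -x i := rfl

theorem norm_Amap (x : PE l p) : ‖Amap l p x‖ = ‖x‖ := by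
  simp only [EuclideanSpace.norm_eq, Amap_apply, apply_ite, norm_neg, ite_self]

theorem pseudoInner_eq_inner_Amap (x y : PE l p) :
    pseudoInner l p x y = inner ℝ (Amap l p x) y := by
  simp only [pseudoInner, PiLp.inner_apply, Amap_apply]
  exact Finset.sum_congr rfl fun i _ => by split_ifs <;> simp [mul_comm]

theorem abs_pseudoInner_le (x y : PE l p) : |pseudoInner l p x y| ≤ ‖x‖ * ‖y‖ := by
  rw [pseudoInner_eq_inner_Amap, ← norm_Amap x]
  exact abs_real_inner_le_norm _ _

theorem Q_add (x y : PE l p) : Q l p (x + y) = Q l p x + 2 * pseudoInner l p x y + Q l p y := by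
  simp only [Q, pseudoInner, Finset.mul_sum, ← Finset.sum_add_distrib, PiLp.add_apply]
  exact Finset.sum_congr rfl fun i _ => by split_ifs <;> ring

@[fun_prop]
theorem continuous_Q : Continuous (Q l p) := by
  unfold Q
  exact continuous_finsetSum _ fun i _ => by split_ifs <;> fun_prop

@[fun_prop]
theorem continuous_Amap : Continuous (Amap l p) := by
  unfold Amap
  exact (PiLp.continuous_toLp 2 _).comp (continuous_pi fun i => by split_ifs <;> fun_prop)

end PseudoEuclidean

namespace PseudoLipschitz

variable {l p : ℕ} {L : ℝ} {X : Set (PE l p)}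

theorem mono {L' : ℝ} (h : PseudoLipschitz l p L X) (hLL' : L ≤ L') : PseudoLipschitz l p L' X :=
  fun x hx y hy => (h x hx y hy).trans (mul_le_mul_of_nonneg_right hLL' (Real.sqrt_nonneg _))

theorem mul_norm_sq_le_Q (h : PseudoLipschitz l p L X) {x y : PE l p} (hx : x ∈ X) (hy : y ∈ X) :
    (1 - L ^ 2) * ‖x - y‖ ^ 2 ≤ (1 + L ^ 2) * Q l p (x - y) := by
  have hP : normP l p (x - y) ^ 2 ≤ L ^ 2 * normL l p (x - y) ^ 2 := by
    rw [← mul_pow, sq, sq]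
    exact mul_self_le_mul_self (Real.sqrt_nonneg _) (h x hx y hy)
  rw [norm_sq_eq_normL_sq_add_normP_sq, Q_eq_normL_sq_sub_normP_sq]
  linarith

theorem norm_sub_le_of_Q_le (h : PseudoLipschitz l p L X) (hL : |L| < 1) {x₀ y : PE l p}
    (hx₀ : x₀ ∈ X) (hy : y ∈ X) {z : PE l p} (hQ : Q l p (y - z) ≤ Q l p (x₀ - z)) :
    ‖y - x₀‖ ≤ 2 * (1 + L ^ 2) / (1 - L ^ 2) * ‖x₀ - z‖ := by
  have hL2 : 0 < 1 - L ^ 2 := by rw [sub_pos, sq_lt_one_iff_abs_lt_one]; exact hL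
  set w := y - x₀
  set v := x₀ - z
  -- Expanding `Q(w + v) ≤ Q(v)` leaves `Q(w) ≤ -2⟪w, v⟫ ≤ 2‖w‖‖v‖`.
  have hQw : Q l p w ≤ 2 * (‖w‖ * ‖v‖) := by
    have hexp := Q_add w v
    rw [show w + v = y - z by simp [w, v]] at hexp
    linarith [neg_abs_le (pseudoInner l p w v), abs_pseudoInner_le w v]
  have hsq : (1 - L ^ 2) * ‖w‖ * ‖w‖ ≤ 2 * (1 + L ^ 2) * ‖v‖ * ‖w‖ := by
    nlinarith [h.mul_norm_sq_le_Q hy hx₀, sq_nonneg L]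
  rw [div_mul_eq_mul_div, le_div_iff₀' hL2]
  rcases (norm_nonneg w).eq_or_lt with hw | hw
  · rw [← hw, mul_zero]; positivity
  · exact le_of_mul_le_mul_right hsq hw

theorem mm_nonempty (h : PseudoLipschitz l p L X) (hL : |L| < 1) (hne : X.Nonempty)
    (hX : IsClosed X) (a : PE l p) : (mm l p X a).Nonempty := by
  obtain ⟨x₀, hx₀⟩ := hne
  have hcont : ContinuousOn (fun y => Q l p (y - a)) X := by fun_prop
  have hfar : ∀ᶠ y in cocompact (PE l p) ⊓ 𝓟 X, Q l p (x₀ - a) ≤ Q l p (y - a) := by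
    filter_upwards [mem_inf_of_left (isCompact_closedBall x₀
      (2 * (1 + L ^ 2) / (1 - L ^ 2) * ‖x₀ - a‖)).compl_mem_cocompact,
      mem_inf_of_right (mem_principal_self X)] with y hyfar hy
    by_contra! hlt
    exact hyfar (mem_closedBall_iff_norm.2 (h.norm_sub_le_of_Q_le hL hx₀ hy hlt.le))
  obtain ⟨y, hy, hmin⟩ := hcont.exists_isMinOn' hX hx₀ hfar
  exact ⟨y, hy, isMinOn_iff.1 hmin⟩

theorem continuousOn_of_mm_eq_singleton (h : PseudoLipschitz l p L X) (hL : |L| < 1)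
    (hX : IsClosed X) {s : Set (PE l p)} {f : PE l p → PE l p}
    (hf : ∀ x ∈ s, mm l p X x = {f x}) : ContinuousOn f s := by
  intro x hx
  set C := 2 * (1 + L ^ 2) / (1 - L ^ 2)
  have hC : 0 ≤ C := div_nonneg (by positivity) (by nlinarith [abs_lt.1 hL])
  have hmem : ∀ z ∈ s, f z ∈ mm l p X z := fun z hz => hf z hz ▸ rfl
  have hnear : ∀ᶠ z in 𝓝 x, ‖f x - z‖ < ‖f x - x‖ + 1 :=
    (continuous_const.sub continuous_id).norm.continuousAt.eventually_lt continuousAt_const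
      (lt_add_one _)
  refine continuousWithinAt_of_isMinOn_of_unique (F := fun z y => Q l p (y - z)) (by fun_prop) hX
    (isCompact_closedBall (f x) (C * (‖f x - x‖ + 1))) hmem
    (fun b hb hbmin => (hf x hx).subset ⟨hb, hbmin⟩) ?_
  filter_upwards [nhdsWithin_le_nhds hnear, self_mem_nhdsWithin] with z hz hzs
  rw [mem_closedBall_iff_norm]
  calc ‖f z - f x‖ ≤ C * ‖f x - z‖ :=
        h.norm_sub_le_of_Q_le hL (hmem x hx).1 (hmem z hzs).1 ((hmem z hzs).2 (f x) (hmem x hx).1)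
    _ ≤ C * (‖f x - x‖ + 1) := by gcongr

end PseudoLipschitz

theorem m_singleton_and_continuous_off_medialAxis_general (l p : ℕ) (L : ℝ) (hL : L < 1)
    (X : Set (PE l p)) (hne : X.Nonempty) (hX : IsClosed X)
    (hlip : PseudoLipschitz l p L X) :
    (∀ x ∉ medialAxis l p X, ∃ y : PE l p, mm l p X x = {y}) ∧
    (∀ f : PE l p → PE l p, (∀ x ∉ medialAxis l p X, mm l p X x = {f x}) →
      (∀ x ∈ (medialAxis l p X)ᶜ, f x ∈ X) ∧
      ContinuousOn f (medialAxis l p X)ᶜ ∧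
      ContinuousOn (fun x => (2 : ℝ) • Amap l p (x - f x)) (medialAxis l p X)ᶜ) := by
  have hL' : |max L 0| < 1 := abs_lt.2 ⟨by linarith [le_max_right L 0], max_lt hL one_pos⟩
  have hlip' := hlip.mono (le_max_left L 0)
  refine ⟨fun x hx => ?_, fun f hf => ?_⟩
  · obtain ⟨y, hy⟩ | hnt := (hlip'.mm_nonempty hL' hne hX x).exists_eq_singleton_or_nontrivial
    exacts [⟨y, hy⟩, absurd hnt hx]
  have hfc : ContinuousOn f (medialAxis l p X)ᶜ := hlip'.continuousOn_of_mm_eq_singleton hL' hX hf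
  refine ⟨fun x hx => (hf x hx ▸ mem_singleton (f x) : f x ∈ mm l p X x).1, hfc, ?_⟩
  fun_prop

/-- For nonempty closed `L`-pseudo-Lipschitz `X` with `L < 1`: on `ℝ^n \ M_X`
the set `m(x)` is a singleton, and any selection `f` of `m` is continuous on `ℝ^n \ M_X`;
consequently `x ↦ 2A(x − f x) = ∇ρ(x)` is continuous on `ℝ^n \ M_X`. -/
theorem m_singleton_and_continuous_off_medialAxis (l p : ℕ) (hl : 1 ≤ l) (L : ℝ) (hL : L < 1)
    (X : Set (PE l p)) (hne : X.Nonempty) (hX : IsClosed X)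
    (hlip : PseudoLipschitz l p L X) :
    (∀ x ∉ medialAxis l p X, ∃ y : PE l p, mm l p X x = {y}) ∧
    (∀ f : PE l p → PE l p, (∀ x ∉ medialAxis l p X, mm l p X x = {f x}) →
      (∀ x ∈ (medialAxis l p X)ᶜ, f x ∈ X) ∧
      ContinuousOn f (medialAxis l p X)ᶜ ∧
      ContinuousOn (fun x => (2 : ℝ) • Amap l p (x - f x)) (medialAxis l p X)ᶜ) :=
  m_singleton_and_continuous_off_medialAxis_general l p L hL X hne hX hlip
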